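/- arXiv:2202.03000 — 2 statements merged into one kernel-verified Lean document; each statement's English description precedes it below -/
import Mathlib

section
/- Let Γ be a finite undirected simple graph on vertices x_1,…,x_n, fix i_0 ∈ {1,…,n}, an integer z ≠ 0 and integers t_1,…,t_N, and set x := x_{i_0}^z · y_1^{t_1}⋯y_N^{t_N} ∈ G_Γ. Then the centralizer of x in G_Γ equals the set of all elements of the form ∏_{i : i = i_0 or x_{i_0}x_i ∈ E} x_i^{v_i} · ∏_{l=1}^N y_l^{s_l} with v_i, s_l ∈ ℤ; that is, it is the subgroup of G_Γ generated by x_{i_0}, the vertices adjacent to x_{i_0}, and y_1,…,y_N. -/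
open scoped commutatorElement

/-- Non-adjacent pairs `(i,j)` with `i < j`. -/
abbrev NonEdge {V : Type} [LinearOrder V] (Γ : SimpleGraph V) : Type :=
  {p : V × V // p.1 < p.2 ∧ ¬ Γ.Adj p.1 p.2}

abbrev GraphGens {V : Type} [LinearOrder V] (Γ : SimpleGraph V) : Type := V ⊕ NonEdge Γ

/-- The relations of the 2-step nilpotent group associated to a graph. -/
def GraphRels {V : Type} [LinearOrder V] (Γ : SimpleGraph V) : Set (FreeGroup (GraphGens Γ)) :=
  {r | (∃ i j : V, Γ.Adj i j ∧
      r = ⁅(FreeGroup.of (Sum.inl j) : FreeGroup (GraphGens Γ)), FreeGroup.of (Sum.inl i)⁆) ∨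
    (∃ p : NonEdge Γ,
      r = ⁅(FreeGroup.of (Sum.inl p.1.2) : FreeGroup (GraphGens Γ)), FreeGroup.of (Sum.inl p.1.1)⁆ *
        (FreeGroup.of (Sum.inr p))⁻¹) ∨
    (∃ (l : V) (p : NonEdge Γ),
      r = ⁅(FreeGroup.of (Sum.inl l) : FreeGroup (GraphGens Γ)), FreeGroup.of (Sum.inr p)⁆)}

/-- The 2-step nilpotent group associated to a graph. -/
abbrev GraphGroup {V : Type} [LinearOrder V] (Γ : SimpleGraph V) : Type :=
  PresentedGroup (GraphRels Γ)

/-- The generator of `GraphGroup Γ` corresponding to the vertex `i`. -/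
def xg {V : Type} [LinearOrder V] (Γ : SimpleGraph V) (i : V) : GraphGroup Γ :=
  PresentedGroup.of (Sum.inl i)

/-- The central generator of `GraphGroup Γ` corresponding to a non-adjacent pair. -/
def yg {V : Type} [LinearOrder V] (Γ : SimpleGraph V) (p : NonEdge Γ) : GraphGroup Γ :=
  PresentedGroup.of (Sum.inr p)

/-- Twisted conjugacy: `a = c * b * (φ c)⁻¹` for some `c`. -/
def TwistedConj {G : Type*} [Group G] (φ : G →* G) (a b : G) : Prop :=
  ∃ c : G, a = c * b * (φ c)⁻¹

/-- The Reidemeister number of an endomorphism: the number of twisted conjugacy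
classes, as an element of `ℕ∞`. -/
noncomputable def reidemeisterNumber {G : Type*} [Group G] (φ : G →* G) : ℕ∞ :=
  ENat.card (Quot (TwistedConj φ))

/-- The Reidemeister spectrum of a group. -/
noncomputable def reidemeisterSpectrum (G : Type*) [Group G] : Set ℕ∞ :=
  {r : ℕ∞ | ∃ φ : G ≃* G, r = reidemeisterNumber φ.toMonoidHom}

/-- `|x|_∞ : ℤ → ℕ∞`. -/
def natAbsInfty (x : ℤ) : ℕ∞ := if x = 0 then ⊤ else (x.natAbs : ℕ∞)

/-- A graph is a (simplicial) join if its vertex set can be partitioned in two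
nonempty parts such that all pairs of vertices in different parts are adjacent. -/
def IsJoinGraph {V : Type*} (Γ : SimpleGraph V) : Prop :=
  ∃ A B : Set V, A.Nonempty ∧ B.Nonempty ∧ Disjoint A B ∧ A ∪ B = Set.univ ∧
    ∀ a ∈ A, ∀ b ∈ B, Γ.Adj a b

/-!
Realise `G_Γ` concretely as `ℤ^V × ℤ^{non-edges}` with multiplication twisted by the bilinear
form `β(a, b)(i, j) = a_j b_i`; there two elements commute iff `β` is symmetric on their
`ℤ^V`-parts. If `g` commutes with `x_{i₀}^z w`, evaluating this symmetry at the non-edge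
`{i₀, j}` shows that the `x_j`-exponent of `g` vanishes for every `j` outside the closed
neighbourhood of `i₀`. Conversely, the commutator of two generators is trivial or a `y^{±1}`, and
the `y`'s are central, so every commutator lies in the subgroup `K` generated by that
neighbourhood and the `y`'s. Hence `G_Γ ⧸ K` is abelian, the image of `g` there is determined by
its `x`-exponents, and so it is trivial.
-/

-- for the `CommGroup` structure on abelian quotients
open scoped IsMulCommutative

@[ext]
structure BilinCentralExt {A B : Type*} [AddCommGroup A] [AddCommGroup B]
    (β : A →+ A →+ B) where
  fst : A
  snd : B

namespace BilinCentralExt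

variable {A B : Type*} [AddCommGroup A] [AddCommGroup B] {β : A →+ A →+ B}

instance : Mul (BilinCentralExt β) :=
  ⟨fun g h => ⟨g.fst + h.fst, g.snd + h.snd + β g.fst h.fst⟩⟩
instance : One (BilinCentralExt β) := ⟨⟨0, 0⟩⟩
instance : Inv (BilinCentralExt β) := ⟨fun g => ⟨-g.fst, β g.fst g.fst - g.snd⟩⟩

@[simp] lemma mul_fst (g h : BilinCentralExt β) : (g * h).fst = g.fst + h.fst := rfl
@[simp] lemma mul_snd (g h : BilinCentralExt β) :
    (g * h).snd = g.snd + h.snd + β g.fst h.fst := rfl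
@[simp] lemma one_fst : (1 : BilinCentralExt β).fst = 0 := rfl
@[simp] lemma one_snd : (1 : BilinCentralExt β).snd = 0 := rfl
@[simp] lemma inv_fst (g : BilinCentralExt β) : g⁻¹.fst = -g.fst := rfl
@[simp] lemma inv_snd (g : BilinCentralExt β) : g⁻¹.snd = β g.fst g.fst - g.snd := rfl

instance : Group (BilinCentralExt β) where
  mul_assoc g h k := by ext <;> simp <;> abel
  one_mul g := by ext <;> simp
  mul_one g := by ext <;> simp
  inv_mul_cancel g := by ext <;> simp

lemma commutatorElement_eq (g h : BilinCentralExt β) :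
    ⁅g, h⁆ = ⟨0, β g.fst h.fst - β h.fst g.fst⟩ := by
  ext
  · simp [commutatorElement_def]
  · simp [commutatorElement_def]; abel

lemma commute_iff {g h : BilinCentralExt β} :
    Commute g h ↔ β g.fst h.fst = β h.fst g.fst := by
  rw [← commutatorElement_eq_one_iff_commute, commutatorElement_eq, BilinCentralExt.ext_iff]
  simp [sub_eq_zero]

variable (β) in
def fstHom : BilinCentralExt β →* Multiplicative A where
  toFun g := .ofAdd g.fst
  map_one' := rfl
  map_mul' _ _ := rfl

lemma zpow_fst (g : BilinCentralExt β) (m : ℤ) : (g ^ m).fst = m • g.fst :=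
  congrArg Multiplicative.toAdd (map_zpow (fstHom β) g m)

end BilinCentralExt

lemma commutator_le_of_closure_eq_top {G : Type*} [Group G] {s : Set G}
    (hs : Subgroup.closure s = ⊤) {N : Subgroup G} [N.Normal]
    (hN : ∀ a ∈ s, ∀ b ∈ s, ⁅a, b⁆ ∈ N) : commutator G ≤ N := by
  rw [← Subgroup.Normal.quotient_commutative_iff_commutator_le]
  set π := QuotientGroup.mk' N
  have hgen : Subgroup.closure (π '' s) = ⊤ := by
    rw [← MonoidHom.map_closure, hs, ← MonoidHom.range_eq_map, QuotientGroup.range_mk']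
  have hcomm : IsMulCommutative (Subgroup.closure (π '' s)) := by
    refine Subgroup.isMulCommutative_closure ?_
    rintro _ ⟨a, ha, rfl⟩ _ ⟨b, hb, rfl⟩
    rw [← commutatorElement_eq_one_iff_mul_comm, ← map_commutatorElement,
      QuotientGroup.mk'_apply, QuotientGroup.eq_one_iff]
    exact hN a ha b hb
  rw [hgen] at hcomm
  exact ⟨⟨fun x y => congrArg Subtype.val
    (mul_comm (⟨x, trivial⟩ : (⊤ : Subgroup (G ⧸ N))) ⟨y, trivial⟩)⟩⟩

def prodZPowHom {ι Q : Type*} [Fintype ι] [CommGroup Q] (q : ι → Q) :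
    Multiplicative (ι → ℤ) →* Q where
  toFun v := ∏ i, q i ^ v.toAdd i
  map_one' := by simp
  map_mul' u v := by simp [zpow_add, Finset.prod_mul_distrib]

section GraphGroup

variable {V : Type} [LinearOrder V] {Γ : SimpleGraph V}

lemma mk_eq_one_of_mem_graphRels {r : FreeGroup (GraphGens Γ)} (hr : r ∈ GraphRels Γ) :
    PresentedGroup.mk (GraphRels Γ) r = 1 :=
  (QuotientGroup.eq_one_iff r).mpr (Subgroup.subset_normalClosure hr)

lemma commute_xg_of_adj {i j : V} (h : Γ.Adj i j) : Commute (xg Γ j) (xg Γ i) := by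
  have := mk_eq_one_of_mem_graphRels (Γ := Γ) (Or.inl ⟨i, j, h, rfl⟩)
  rwa [map_commutatorElement, commutatorElement_eq_one_iff_commute] at this

lemma yg_eq_commutatorElement (p : NonEdge Γ) : yg Γ p = ⁅xg Γ p.1.2, xg Γ p.1.1⁆ := by
  have := mk_eq_one_of_mem_graphRels (Γ := Γ) (Or.inr (Or.inl ⟨p, rfl⟩))
  rw [map_mul, map_inv, map_commutatorElement, mul_inv_eq_one] at this
  exact this.symm

lemma commute_xg_yg (l : V) (p : NonEdge Γ) : Commute (xg Γ l) (yg Γ p) := by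
  have := mk_eq_one_of_mem_graphRels (Γ := Γ) (Or.inr (Or.inr ⟨l, p, rfl⟩))
  rwa [map_commutatorElement, commutatorElement_eq_one_iff_commute] at this

lemma yg_mem_center (p : NonEdge Γ) : yg Γ p ∈ Subgroup.center (GraphGroup Γ) := by
  have hx (l : V) : xg Γ l ∈ Subgroup.centralizer {yg Γ p} :=
    Subgroup.mem_centralizer_singleton_iff.mpr (commute_xg_yg l p).eq
  have hgen : Subgroup.closure (Set.range PresentedGroup.of) ≤
      Subgroup.centralizer {yg Γ p} := by
    rw [Subgroup.closure_le]
    rintro _ ⟨l | q, rfl⟩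
    · exact hx l
    · change yg Γ q ∈ _
      rw [yg_eq_commutatorElement q, commutatorElement_def]
      exact mul_mem (mul_mem (mul_mem (hx _) (hx _)) (inv_mem (hx _))) (inv_mem (hx _))
  rw [PresentedGroup.closure_range_of] at hgen
  exact Subgroup.mem_center_iff.mpr fun g =>
    Subgroup.mem_centralizer_singleton_iff.mp (hgen (Subgroup.mem_top g))

lemma closure_range_yg_le_center :
    Subgroup.closure (Set.range (yg Γ)) ≤ Subgroup.center (GraphGroup Γ) :=
  (Subgroup.closure_le _).mpr (Set.range_subset_iff.mpr yg_mem_center)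

instance : (Subgroup.closure (Set.range (yg Γ))).Normal where
  conj_mem w hw g := by
    rw [Subgroup.mem_center_iff.mp (closure_range_yg_le_center hw) g, mul_inv_cancel_right]
    exact hw

lemma commutatorElement_xg_mem_closure_range_yg (i j : V) :
    ⁅xg Γ i, xg Γ j⁆ ∈ Subgroup.closure (Set.range (yg Γ)) := by
  have hlt {i j : V} (hij : i < j) :
      ⁅xg Γ j, xg Γ i⁆ ∈ Subgroup.closure (Set.range (yg Γ)) := by
    by_cases hadj : Γ.Adj i j
    · rw [commutatorElement_eq_one_iff_commute.mpr (commute_xg_of_adj hadj)]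
      exact one_mem _
    · exact Subgroup.subset_closure ⟨⟨(i, j), hij, hadj⟩, yg_eq_commutatorElement _⟩
  rcases lt_trichotomy i j with hij | rfl | hij
  · rw [← commutatorElement_inv]
    exact inv_mem (hlt hij)
  · rw [commutatorElement_self]
    exact one_mem _
  · exact hlt hij

lemma commutator_le_closure_range_yg :
    commutator (GraphGroup Γ) ≤ Subgroup.closure (Set.range (yg Γ)) := by
  refine commutator_le_of_closure_eq_top (PresentedGroup.closure_range_of _) ?_
  have hy (p : NonEdge Γ) (g : GraphGroup Γ) :
      ⁅g, yg Γ p⁆ ∈ Subgroup.closure (Set.range (yg Γ)) := by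
    rw [commutatorElement_eq_one_iff_commute.mpr
      (Subgroup.mem_center_iff.mp (yg_mem_center p) g)]
    exact one_mem _
  rintro _ ⟨i | p, rfl⟩ _ ⟨j | q, rfl⟩
  · exact commutatorElement_xg_mem_closure_range_yg i j
  · exact hy q _
  · rw [← commutatorElement_inv]
    exact inv_mem (hy p _)
  · exact hy q _

end GraphGroup

section Model

variable {V : Type} [LinearOrder V] (Γ : SimpleGraph V)

def graphCocycle : (V → ℤ) →+ (V → ℤ) →+ (NonEdge Γ → ℤ) :=
  AddMonoidHom.mk' (fun a => AddMonoidHom.mk' (fun b p => a p.1.2 * b p.1.1)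
      fun b b' => by ext; simp [mul_add])
    fun a a' => by ext; simp [add_mul]

variable {Γ}

lemma graphCocycle_apply (a b : V → ℤ) (p : NonEdge Γ) :
    graphCocycle Γ a b p = a p.1.2 * b p.1.1 := rfl

lemma graphCocycle_single_single (i j : V) (p : NonEdge Γ) :
    graphCocycle Γ (Pi.single j 1) (Pi.single i 1) p = if p.1 = (i, j) then 1 else 0 := by
  simp only [graphCocycle_apply, Pi.single_apply, Prod.ext_iff]
  split_ifs <;> simp_all

lemma eq_zero_of_graphCocycle_comm_zsmul_single {c : ℤ} (hc : c ≠ 0) {i j : V} (hji : j ≠ i)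
    (hadj : ¬Γ.Adj i j) {a : V → ℤ}
    (h : graphCocycle Γ a (c • Pi.single i 1) = graphCocycle Γ (c • Pi.single i 1) a) :
    a j = 0 := by
  rcases lt_or_gt_of_ne hji with hlt | hlt
  · have := congrFun h ⟨(j, i), hlt, fun h => hadj h.symm⟩
    simpa [graphCocycle_apply, hji, hc] using this
  · have := congrFun h ⟨(i, j), hlt, hadj⟩
    simpa [graphCocycle_apply, hji, hc] using this

variable (Γ) in
def graphGroupToModel : GraphGroup Γ →* BilinCentralExt (graphCocycle Γ) :=
  PresentedGroup.toGroup
      (f := Sum.elim (fun i => ⟨Pi.single i 1, 0⟩) fun p => ⟨0, Pi.single p 1⟩) <| by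
    rintro _ (⟨i, j, hadj, rfl⟩ | ⟨p, rfl⟩ | ⟨l, p, rfl⟩)
    · simp only [map_commutatorElement, FreeGroup.lift_apply_of, Sum.elim_inl,
        BilinCentralExt.commutatorElement_eq]
      ext p
      · rfl
      · have h₁ : p.1 ≠ (i, j) := fun h => p.2.2 (h ▸ hadj)
        have h₂ : p.1 ≠ (j, i) := fun h => p.2.2 (h ▸ hadj.symm)
        simp [graphCocycle_single_single, h₁, h₂]
    · simp only [map_mul, map_inv, map_commutatorElement, FreeGroup.lift_apply_of, Sum.elim_inl,
        Sum.elim_inr, BilinCentralExt.commutatorElement_eq, mul_inv_eq_one]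
      ext q
      · rfl
      · have h₁ : q.1 = p.1 ↔ q = p := Subtype.ext_iff.symm
        have h₂ : q.1 ≠ (p.1.2, p.1.1) := fun h => by
          have := q.2.1
          simp only [h] at this
          exact lt_asymm this p.2.1
        simp [graphCocycle_single_single, h₁, h₂, Pi.single_apply]
    · simp only [map_commutatorElement, FreeGroup.lift_apply_of, Sum.elim_inl, Sum.elim_inr,
        BilinCentralExt.commutatorElement_eq]
      ext <;> simp

@[simp] lemma graphGroupToModel_xg (i : V) :
    graphGroupToModel Γ (xg Γ i) = ⟨Pi.single i 1, 0⟩ :=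
  PresentedGroup.toGroup.of _

@[simp] lemma graphGroupToModel_yg (p : NonEdge Γ) :
    graphGroupToModel Γ (yg Γ p) = ⟨0, Pi.single p 1⟩ :=
  PresentedGroup.toGroup.of _

lemma graphGroupToModel_fst_eq_zero {w : GraphGroup Γ}
    (hw : w ∈ Subgroup.closure (Set.range (yg Γ))) : (graphGroupToModel Γ w).fst = 0 := by
  have : Subgroup.closure (Set.range (yg Γ)) ≤
      ((BilinCentralExt.fstHom _).comp (graphGroupToModel Γ)).ker := by
    rw [Subgroup.closure_le]
    rintro _ ⟨p, rfl⟩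
    simp [BilinCentralExt.fstHom]
  exact congrArg Multiplicative.toAdd (this hw)

end Model

section Centralizer

variable {V : Type} [LinearOrder V] (Γ : SimpleGraph V) (i₀ : V)

def closedNbhdSubgroup : Subgroup (GraphGroup Γ) :=
  Subgroup.closure (({xg Γ i₀} ∪ {g | ∃ i, Γ.Adj i₀ i ∧ g = xg Γ i}) ∪ Set.range (yg Γ))

variable {Γ i₀}

lemma xg_mem_closedNbhdSubgroup {j : V} (hj : j = i₀ ∨ Γ.Adj i₀ j) :
    xg Γ j ∈ closedNbhdSubgroup Γ i₀ := by
  apply Subgroup.subset_closure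
  rcases hj with rfl | hj
  · exact .inl (.inl rfl)
  · exact .inl (.inr ⟨j, hj, rfl⟩)

lemma closure_range_yg_le_closedNbhdSubgroup :
    Subgroup.closure (Set.range (yg Γ)) ≤ closedNbhdSubgroup Γ i₀ :=
  Subgroup.closure_mono Set.subset_union_right

lemma yg_mem_closedNbhdSubgroup (p : NonEdge Γ) : yg Γ p ∈ closedNbhdSubgroup Γ i₀ :=
  closure_range_yg_le_closedNbhdSubgroup (Subgroup.subset_closure ⟨p, rfl⟩)

lemma commutator_le_closedNbhdSubgroup :
    commutator (GraphGroup Γ) ≤ closedNbhdSubgroup Γ i₀ :=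
  commutator_le_closure_range_yg.trans closure_range_yg_le_closedNbhdSubgroup

instance : (closedNbhdSubgroup Γ i₀).Normal :=
  .of_commutator_le _ commutator_le_closedNbhdSubgroup

instance : IsMulCommutative (GraphGroup Γ ⧸ closedNbhdSubgroup Γ i₀) :=
  Subgroup.Normal.quotient_commutative_iff_commutator_le.mpr
    commutator_le_closedNbhdSubgroup

lemma mk'_closedNbhdSubgroup_eq [Fintype V] :
    QuotientGroup.mk' (closedNbhdSubgroup Γ i₀) =
      (prodZPowHom fun j => (xg Γ j : GraphGroup Γ ⧸ closedNbhdSubgroup Γ i₀)).comp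
        ((BilinCentralExt.fstHom _).comp (graphGroupToModel Γ)) := by
  refine PresentedGroup.ext fun s => ?_
  rcases s with i | p
  · change (xg Γ i : GraphGroup Γ ⧸ closedNbhdSubgroup Γ i₀) =
      prodZPowHom _ (BilinCentralExt.fstHom _ (graphGroupToModel Γ (xg Γ i)))
    simp [prodZPowHom, BilinCentralExt.fstHom, Pi.single_apply]
  · change (yg Γ p : GraphGroup Γ ⧸ closedNbhdSubgroup Γ i₀) =
      prodZPowHom _ (BilinCentralExt.fstHom _ (graphGroupToModel Γ (yg Γ p)))
    simp only [graphGroupToModel_yg, prodZPowHom, BilinCentralExt.fstHom]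
    simp [yg_mem_closedNbhdSubgroup]

lemma mem_closedNbhdSubgroup_of_fst_eq_zero [Fintype V] {g : GraphGroup Γ}
    (h : ∀ j, j ≠ i₀ → ¬Γ.Adj i₀ j → (graphGroupToModel Γ g).fst j = 0) :
    g ∈ closedNbhdSubgroup Γ i₀ := by
  rw [← QuotientGroup.eq_one_iff, ← QuotientGroup.mk'_apply, mk'_closedNbhdSubgroup_eq]
  refine Finset.prod_eq_one fun j _ => ?_
  by_cases hj : j = i₀ ∨ Γ.Adj i₀ j
  · simp only [(QuotientGroup.eq_one_iff _).mpr (xg_mem_closedNbhdSubgroup hj), one_zpow]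
  · obtain ⟨hji, hadj⟩ := not_or.mp hj
    simp [BilinCentralExt.fstHom, h j hji hadj]

lemma closedNbhdSubgroup_le_centralizer (z : ℤ) {w : GraphGroup Γ}
    (hw : w ∈ Subgroup.closure (Set.range (yg Γ))) :
    closedNbhdSubgroup Γ i₀ ≤ Subgroup.centralizer {xg Γ i₀ ^ z * w} := by
  rw [closedNbhdSubgroup, Subgroup.closure_le]
  intro s hs
  suffices Commute s (xg Γ i₀) from Subgroup.mem_centralizer_singleton_iff.mpr
    ((this.zpow_right z).mul_right
      (Subgroup.mem_center_iff.mp (closure_range_yg_le_center hw) s))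
  rcases hs with (rfl | ⟨i, hadj, rfl⟩) | ⟨p, rfl⟩
  · exact .refl _
  · exact commute_xg_of_adj hadj
  · exact (commute_xg_yg i₀ p).symm

lemma centralizer_le_closedNbhdSubgroup [Fintype V] {z : ℤ} (hz : z ≠ 0)
    {w : GraphGroup Γ} (hw : w ∈ Subgroup.closure (Set.range (yg Γ))) :
    Subgroup.centralizer {xg Γ i₀ ^ z * w} ≤ closedNbhdSubgroup Γ i₀ := by
  intro g hg
  have hcomm : Commute (graphGroupToModel Γ g) (graphGroupToModel Γ (xg Γ i₀ ^ z * w)) :=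
    (show Commute g _ from Subgroup.mem_centralizer_singleton_iff.mp hg).map _
  have hx : (graphGroupToModel Γ (xg Γ i₀ ^ z * w)).fst = z • Pi.single i₀ 1 := by
    simp [BilinCentralExt.zpow_fst, graphGroupToModel_fst_eq_zero hw]
  rw [BilinCentralExt.commute_iff, hx] at hcomm
  exact mem_closedNbhdSubgroup_of_fst_eq_zero fun j hji hadj =>
    eq_zero_of_graphCocycle_comm_zsmul_single hz hji hadj hcomm

end Centralizer

/-- For `x = x_{i₀}^z · w` with `z ≠ 0` and `w` a product of powers of the `y_l`,
the centralizer of `x` in `G_Γ` is the subgroup generated by `x_{i₀}`, the vertices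
adjacent to `x_{i₀}` and `y_1, …, y_N`. -/
theorem centralizer_of_vertex_power_mul_central
    {n : ℕ} (Γ : SimpleGraph (Fin n)) (i₀ : Fin n) (z : ℤ) (hz : z ≠ 0)
    (w : GraphGroup Γ) (hw : w ∈ Subgroup.closure (Set.range (yg Γ))) :
    Subgroup.centralizer {xg Γ i₀ ^ z * w} =
      Subgroup.closure
        (({xg Γ i₀} ∪ {g | ∃ i, Γ.Adj i₀ i ∧ g = xg Γ i}) ∪ Set.range (yg Γ)) :=
  le_antisymm (centralizer_le_closedNbhdSubgroup hz hw) (closedNbhdSubgroup_le_centralizer z hw)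
end

section
/- For any two finite undirected simple graphs Γ^(1) and Γ^(2), the group G_{Γ^(1) ∗ Γ^(2)} associated to the simplicial join of Γ^(1) and Γ^(2) is isomorphic to the direct product G_{Γ^(1)} × G_{Γ^(2)}. -/
open scoped commutatorElement

/-- The simplicial join of two graphs, on the sum of the vertex types: all edges of the two
graphs together with all pairs consisting of one vertex of each graph. -/
def sumJoin {V₁ V₂ : Type} (Γ₁ : SimpleGraph V₁) (Γ₂ : SimpleGraph V₂) :
    SimpleGraph (V₁ ⊕ V₂) where
  Adj a b :=
    (a.isLeft ∧ b.isRight) ∨ (a.isRight ∧ b.isLeft) ∨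
    (∃ i j, a = Sum.inl i ∧ b = Sum.inl j ∧ Γ₁.Adj i j) ∨
    (∃ i j, a = Sum.inr i ∧ b = Sum.inr j ∧ Γ₂.Adj i j)
  symm := by
    constructor
    rintro a b (⟨h1, h2⟩ | ⟨h1, h2⟩ | ⟨i, j, rfl, rfl, h⟩ | ⟨i, j, rfl, rfl, h⟩)
    · exact Or.inr (Or.inl ⟨h2, h1⟩)
    · exact Or.inl ⟨h2, h1⟩
    · exact Or.inr (Or.inr (Or.inl ⟨j, i, rfl, rfl, h.symm⟩))
    · exact Or.inr (Or.inr (Or.inr ⟨j, i, rfl, rfl, h.symm⟩))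
  loopless := by
    constructor
    rintro a (⟨h1, h2⟩ | ⟨h1, h2⟩ | ⟨i, j, rfl, h2, h⟩ | ⟨i, j, rfl, h2, h⟩)
    · cases a <;> simp_all
    · cases a <;> simp_all
    · cases Sum.inl.inj h2; exact Γ₁.loopless.irrefl i h
    · cases Sum.inr.inj h2; exact Γ₂.loopless.irrefl i h

/-! Since each central generator is the commutator of two vertex generators, a homomorphism out
of `GraphGroup Γ` is determined by the images of the vertices, and any assignment sending adjacent
vertices to commuting elements, and vertices to elements commuting with the commutators of the
images of non-adjacent pairs, extends to one. In `GraphGroup Γ` every commutator of vertex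
generators is central, so the ordering of the vertices plays no role. In the join every vertex of
`Γ₁` is adjacent to every vertex of `Γ₂`, so the copies of `GraphGroup Γ₁` and `GraphGroup Γ₂`
commute, and the obvious maps in the two directions are mutually inverse on generators. -/

theorem PresentedGroup.mk_commutatorElement_of {α : Type*} {rels : Set (FreeGroup α)} (a b : α) :
    PresentedGroup.mk rels ⁅FreeGroup.of a, FreeGroup.of b⁆ =
      ⁅(PresentedGroup.of a : PresentedGroup rels), PresentedGroup.of b⁆ :=
  map_commutatorElement _ _ _

namespace GraphGroup

variable {V : Type} [LinearOrder V] {Γ : SimpleGraph V} {G : Type*} [Group G]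

theorem commutatorElement_xg_of_adj {i j : V} (h : Γ.Adj i j) : ⁅xg Γ j, xg Γ i⁆ = 1 := by
  rw [xg, xg, ← PresentedGroup.mk_commutatorElement_of]
  exact PresentedGroup.one_of_mem (Or.inl ⟨i, j, h, rfl⟩)

theorem commute_xg_of_adj {i j : V} (h : Γ.Adj i j) : Commute (xg Γ i) (xg Γ j) :=
  (commutatorElement_eq_one_iff_commute.mp (commutatorElement_xg_of_adj h)).symm

theorem commutatorElement_xg_nonEdge (p : NonEdge Γ) : ⁅xg Γ p.1.2, xg Γ p.1.1⁆ = yg Γ p := by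
  rw [xg, xg, yg, ← PresentedGroup.mk_commutatorElement_of]
  exact PresentedGroup.mk_eq_mk_of_mul_inv_mem (Or.inr (Or.inl ⟨p, rfl⟩))

theorem commute_xg_yg (l : V) (p : NonEdge Γ) : Commute (xg Γ l) (yg Γ p) := by
  rw [← commutatorElement_eq_one_iff_commute, xg, yg, ← PresentedGroup.mk_commutatorElement_of]
  exact PresentedGroup.one_of_mem (Or.inr (Or.inr ⟨l, p, rfl⟩))

theorem commute_xg_commutatorElement_xg_of_lt (l : V) {i j : V} (h : i < j) :
    Commute (xg Γ l) ⁅xg Γ j, xg Γ i⁆ := by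
  by_cases hadj : Γ.Adj i j
  · rw [commutatorElement_xg_of_adj hadj]
    exact Commute.one_right _
  · exact commutatorElement_xg_nonEdge (Γ := Γ) ⟨(i, j), h, hadj⟩ ▸ commute_xg_yg l _

theorem commute_xg_commutatorElement_xg (l i j : V) : Commute (xg Γ l) ⁅xg Γ j, xg Γ i⁆ := by
  rcases lt_trichotomy i j with h | rfl | h
  · exact commute_xg_commutatorElement_xg_of_lt l h
  · rw [commutatorElement_self]
    exact Commute.one_right _
  · rw [← commutatorElement_inv]
    exact (commute_xg_commutatorElement_xg_of_lt l h).inv_right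

theorem closure_range_xg : Subgroup.closure (Set.range (xg Γ)) = ⊤ := by
  rw [eq_top_iff, ← PresentedGroup.closure_range_of, Subgroup.closure_le]
  rintro _ ⟨i | p, rfl⟩
  · exact Subgroup.subset_closure ⟨i, rfl⟩
  · have hx (i : V) : xg Γ i ∈ Subgroup.closure (Set.range (xg Γ)) :=
      Subgroup.subset_closure ⟨i, rfl⟩
    rw [← yg, ← commutatorElement_xg_nonEdge, commutatorElement_def]
    exact mul_mem (mul_mem (mul_mem (hx _) (hx _)) (inv_mem (hx _))) (inv_mem (hx _))

theorem hom_ext {φ ψ : GraphGroup Γ →* G} (h : ∀ i, φ (xg Γ i) = ψ (xg Γ i)) : φ = ψ := by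
  refine PresentedGroup.ext ?_
  rintro (i | p)
  · exact h i
  · rw [← yg, ← commutatorElement_xg_nonEdge, map_commutatorElement, map_commutatorElement,
      h, h]

def lift (f : V → G) (hadj : ∀ i j, Γ.Adj i j → Commute (f i) (f j))
    (hcentral : ∀ (l : V) (p : NonEdge Γ), Commute (f l) ⁅f p.1.2, f p.1.1⁆) :
    GraphGroup Γ →* G :=
  PresentedGroup.toGroup (f := Sum.elim f fun p => ⁅f p.1.2, f p.1.1⁆) <| by
    rintro r (⟨i, j, h, rfl⟩ | ⟨p, rfl⟩ | ⟨l, p, rfl⟩) <;>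
      simp only [map_mul, map_inv, map_commutatorElement, FreeGroup.lift_apply_of, Sum.elim_inl,
        Sum.elim_inr, mul_inv_cancel, commutatorElement_eq_one_iff_commute]
    · exact (hadj i j h).symm
    · exact hcentral l p

@[simp]
theorem lift_xg (f : V → G) (hadj) (hcentral) (i : V) :
    lift (Γ := Γ) f hadj hcentral (xg Γ i) = f i :=
  PresentedGroup.toGroup.of _

variable {W : Type} [LinearOrder W] {Γ' : SimpleGraph W}

def map (φ : Γ →g Γ') : GraphGroup Γ →* GraphGroup Γ' :=
  lift (xg Γ' ∘ φ) (fun _ _ h => commute_xg_of_adj (φ.map_adj h))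
    (fun _ _ => commute_xg_commutatorElement_xg _ _ _)

@[simp]
theorem map_xg (φ : Γ →g Γ') (i : V) : map φ (xg Γ i) = xg Γ' (φ i) :=
  lift_xg _ _ _ i

theorem commute_of_commute_xg {φ : GraphGroup Γ →* G} {ψ : GraphGroup Γ' →* G}
    (h : ∀ i j, Commute (φ (xg Γ i)) (ψ (xg Γ' j))) (a : GraphGroup Γ) (b : GraphGroup Γ') :
    Commute (φ a) (ψ b) := by
  have hrange : φ.range ≤ Subgroup.centralizer ψ.range := by
    rw [MonoidHom.range_eq_map, MonoidHom.range_eq_map, ← closure_range_xg, ← closure_range_xg,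
      MonoidHom.map_closure, MonoidHom.map_closure, Subgroup.centralizer_closure,
      Subgroup.closure_le]
    rintro _ ⟨_, ⟨i, rfl⟩, rfl⟩ _ ⟨_, ⟨j, rfl⟩, rfl⟩
    exact (h i j).symm
  exact (hrange ⟨a, rfl⟩ (ψ b) ⟨b, rfl⟩).symm

end GraphGroup

@[simp]
theorem Prod.fst_commutatorElement {G H : Type*} [Group G] [Group H] (a b : G × H) :
    ⁅a, b⁆.1 = ⁅a.1, b.1⁆ :=
  rfl

@[simp]
theorem Prod.snd_commutatorElement {G H : Type*} [Group G] [Group H] (a b : G × H) :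
    ⁅a, b⁆.2 = ⁅a.2, b.2⁆ :=
  rfl

section SumJoin

variable {V₁ V₂ : Type} (Γ₁ : SimpleGraph V₁) (Γ₂ : SimpleGraph V₂)

@[simp]
theorem sumJoin_adj_inl_inl {i j : V₁} : (sumJoin Γ₁ Γ₂).Adj (.inl i) (.inl j) ↔ Γ₁.Adj i j := by
  simp [sumJoin]

@[simp]
theorem sumJoin_adj_inr_inr {i j : V₂} : (sumJoin Γ₁ Γ₂).Adj (.inr i) (.inr j) ↔ Γ₂.Adj i j := by
  simp [sumJoin]

@[simp]
theorem sumJoin_adj_inl_inr (i : V₁) (j : V₂) : (sumJoin Γ₁ Γ₂).Adj (.inl i) (.inr j) := by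
  simp [sumJoin]

end SumJoin

namespace GraphGroup

variable {V₁ V₂ : Type} [LinearOrder V₁] [LinearOrder V₂]
  (Γ₁ : SimpleGraph V₁) (Γ₂ : SimpleGraph V₂)

def sumGen : V₁ ⊕ V₂ → GraphGroup Γ₁ × GraphGroup Γ₂ :=
  Sum.elim (fun i => (xg Γ₁ i, 1)) (fun j => (1, xg Γ₂ j))

theorem commute_sumGen_of_adj {u v : V₁ ⊕ V₂} (h : (sumJoin Γ₁ Γ₂).Adj u v) :
    Commute (sumGen Γ₁ Γ₂ u) (sumGen Γ₁ Γ₂ v) := by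
  rw [Prod.commute_iff]
  rcases u with i | i <;> rcases v with j | j <;>
    simp_all [sumGen, commute_xg_of_adj]

theorem commute_sumGen_commutatorElement (u v w : V₁ ⊕ V₂) :
    Commute (sumGen Γ₁ Γ₂ u) ⁅sumGen Γ₁ Γ₂ w, sumGen Γ₁ Γ₂ v⁆ := by
  rw [Prod.commute_iff]
  rcases u with l | l <;> rcases v with i | i <;> rcases w with j | j <;>
    simp [sumGen, commute_xg_commutatorElement_xg]

variable {W : Type} [LinearOrder W] (e : W ≃ V₁ ⊕ V₂)

def joinToProd : GraphGroup ((sumJoin Γ₁ Γ₂).comap e) →* GraphGroup Γ₁ × GraphGroup Γ₂ :=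
  lift (sumGen Γ₁ Γ₂ ∘ e) (fun _ _ => commute_sumGen_of_adj Γ₁ Γ₂)
    (fun _ _ => commute_sumGen_commutatorElement Γ₁ Γ₂ _ _ _)

@[simps]
def inlJoinHom : Γ₁ →g (sumJoin Γ₁ Γ₂).comap e where
  toFun i := e.symm (.inl i)
  map_rel' := by simp

@[simps]
def inrJoinHom : Γ₂ →g (sumJoin Γ₁ Γ₂).comap e where
  toFun j := e.symm (.inr j)
  map_rel' := by simp

def prodToJoin : GraphGroup Γ₁ × GraphGroup Γ₂ →* GraphGroup ((sumJoin Γ₁ Γ₂).comap e) :=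
  (map (inlJoinHom Γ₁ Γ₂ e)).noncommCoprod (map (inrJoinHom Γ₁ Γ₂ e)) <|
    commute_of_commute_xg fun i j => by
      simp only [map_xg]
      exact commute_xg_of_adj (by simp)

theorem prodToJoin_comp_joinToProd :
    (prodToJoin Γ₁ Γ₂ e).comp (joinToProd Γ₁ Γ₂ e) = .id _ := by
  refine hom_ext fun w => ?_
  obtain ⟨u, rfl⟩ := e.symm.surjective w
  rcases u with i | j <;> simp [joinToProd, prodToJoin, sumGen]

theorem joinToProd_comp_prodToJoin :
    (joinToProd Γ₁ Γ₂ e).comp (prodToJoin Γ₁ Γ₂ e) = .id _ := by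
  have h₁ : (joinToProd Γ₁ Γ₂ e).comp (map (inlJoinHom Γ₁ Γ₂ e)) = .inl _ _ :=
    hom_ext fun i => by simp [joinToProd, sumGen]
  have h₂ : (joinToProd Γ₁ Γ₂ e).comp (map (inrJoinHom Γ₁ Γ₂ e)) = .inr _ _ :=
    hom_ext fun j => by simp [joinToProd, sumGen]
  simp only [prodToJoin, MonoidHom.comp_noncommCoprod, h₁, h₂, MonoidHom.noncommCoprod_inl_inr]

def sumJoinEquivProd : GraphGroup ((sumJoin Γ₁ Γ₂).comap e) ≃* GraphGroup Γ₁ × GraphGroup Γ₂ :=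
  (joinToProd Γ₁ Γ₂ e).toMulEquiv (prodToJoin Γ₁ Γ₂ e) (prodToJoin_comp_joinToProd Γ₁ Γ₂ e)
    (joinToProd_comp_prodToJoin Γ₁ Γ₂ e)

end GraphGroup

/-- The group associated to the simplicial join of two graphs is isomorphic to the direct
product of the groups associated to the two graphs.  (The join is realised as a graph on
`Fin (n₁ + n₂)` via the canonical equivalence `Fin n₁ ⊕ Fin n₂ ≃ Fin (n₁ + n₂)`.) -/
theorem graphGroup_of_join_iso_prod
    {n₁ n₂ : ℕ} (Γ₁ : SimpleGraph (Fin n₁)) (Γ₂ : SimpleGraph (Fin n₂)) :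
    Nonempty
      (GraphGroup (SimpleGraph.comap (⇑finSumFinEquiv.symm) (sumJoin Γ₁ Γ₂)) ≃*
        GraphGroup Γ₁ × GraphGroup Γ₂) :=
  ⟨GraphGroup.sumJoinEquivProd Γ₁ Γ₂ finSumFinEquiv.symm⟩
end
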